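/- arXiv:math/0701050 — 2 statements merged into one kernel-verified Lean document; each statement's English description precedes it below -/
import Mathlib

section
/- Let A be a round annulus d₁ − d₇ in ℂ obtained from a nested chain of discs d₁ ⊃ d₂ ⊃ ⋯ ⊃ d₇ where for each i, 2d_{i+1} ⊂ (3/4)d_i and the radius of d_{i+1} is at most 1/16 the radius of d_i. Given six pairwise disjoint discs D₁,…,D₆ with D_i = (1/4)d_i (i = 1,…,6), each centered outside the closure of the others, at least one of the discs D₁,…,D₆ is entirely contained in the annulus (3/4)d₁ − 2d₇. -/
set_option maxHeartbeats 1000000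

open Metric

open Real

lemma cos_half' {x : ℝ} (h0 : 0 ≤ x) (h : x ≤ π/3) : 1/2 ≤ Real.cos x := by
  have := Real.cos_le_cos_of_nonneg_of_le_pi h0 (by linarith [Real.pi_pos]) h
  rwa [Real.cos_pi_div_three] at this


/-- Chain of strongly nested discs: let `d₁ ⊃ ⋯ ⊃ d₇` be discs (indexed by `Fin 7`)
with `2d_{i+1} ⊆ (3/4)d_i` and `rad(d_{i+1}) ≤ rad(d_i)/16`. Given the six pairwise
disjoint discs `D_i = (1/4)d_i` (`i = 1,…,6`), each centered outside the (closure of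
the) others, at least one of them is entirely contained in the annulus
`(3/4)d₁ − 2d₇`. -/
theorem stmt_6 (c : Fin 7 → ℂ) (r : Fin 7 → ℝ) (hr : ∀ i, 0 < r i)
    (hnest : ∀ i : Fin 6,
      closedBall (c i.succ) (2 * r i.succ) ⊆ closedBall (c i.castSucc) (3 / 4 * r i.castSucc))
    (hsize : ∀ i : Fin 6, r i.succ ≤ r i.castSucc / 16)
    (hdisj : ∀ i j : Fin 6, i ≠ j →
      Disjoint (closedBall (c i.castSucc) (r i.castSucc / 4))
               (closedBall (c j.castSucc) (r j.castSucc / 4)))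
    (hcenter : ∀ i j : Fin 6, i ≠ j →
      c i.castSucc ∉ closedBall (c j.castSucc) (r j.castSucc / 4)) :
    ∃ i : Fin 6, closedBall (c i.castSucc) (r i.castSucc / 4) ⊆
      closedBall (c 0) (3 / 4 * r 0) \ closedBall (c 6) (2 * r 6) := by
  -- containment in the big disc
  have contain : ∀ j : Fin 7, closedBall (c j) (3/4 * r j) ⊆ closedBall (c 0) (3/4 * r 0) := by
    intro j
    induction j using Fin.induction with
    | zero => exact subset_rfl
    | succ i ih =>
      exact ((closedBall_subset_closedBall
        (by linarith [hr i.succ] : 3/4 * r i.succ ≤ 2 * r i.succ)).trans (hnest i)).trans ih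
  have DsubA : ∀ i : Fin 6, closedBall (c i.castSucc) (r i.castSucc / 4) ⊆
      closedBall (c 0) (3/4 * r 0) := fun i =>
    (closedBall_subset_closedBall (by linarith [hr i.castSucc])).trans (contain i.castSucc)
  -- size bounds
  have s0 : r 1 ≤ r 0 / 16 := hsize 0
  have s1 : r 2 ≤ r 1 / 16 := hsize 1
  have s2 : r 3 ≤ r 2 / 16 := hsize 2
  have s3 : r 4 ≤ r 3 / 16 := hsize 3
  have s4 : r 5 ≤ r 4 / 16 := hsize 4
  have s5 : r 6 ≤ r 5 / 16 := hsize 5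
  have q : ∀ i : Fin 6, 16 * r 6 ≤ r i.castSucc := by
    intro i
    have hr0 := hr 0; have hr1 := hr 1; have hr2 := hr 2; have hr3 := hr 3
    have hr4 := hr 4; have hr5 := hr 5; have hr6 := hr 6
    fin_cases i
    · show 16 * r 6 ≤ r 0; linarith
    · show 16 * r 6 ≤ r 1; linarith
    · show 16 * r 6 ≤ r 2; linarith
    · show 16 * r 6 ≤ r 3; linarith
    · show 16 * r 6 ≤ r 4; linarith
    · show 16 * r 6 ≤ r 5; linarith
  by_contra hcon
  push_neg at hcon
  have hx : ∀ i : Fin 6, ∃ x, x ∈ closedBall (c i.castSucc) (r i.castSucc / 4) ∧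
      x ∈ closedBall (c 6) (2 * r 6) := by
    intro i
    by_contra hc
    push_neg at hc
    exact hcon i (fun x hxD => ⟨DsubA i hxD, hc x hxD⟩)
  choose x hxD hxB using hx
  have hr6 : 0 < r 6 := hr 6
  -- auxiliary points z i
  set z : Fin 6 → ℂ := fun i =>
    if dist (x i) (c i.castSucc) ≤ 4 * r 6 then c i.castSucc
    else x i + ((4 * r 6) / dist (x i) (c i.castSucc)) • (c i.castSucc - x i) with hz
  have hzc : ∀ i : Fin 6, dist (z i) (c i.castSucc) ≤ r i.castSucc / 4 - 4 * r 6 := by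
    intro i
    have hq := q i
    by_cases hcase : dist (x i) (c i.castSucc) ≤ 4 * r 6
    · simp only [hz, if_pos hcase, dist_self]
      linarith
    · push_neg at hcase
      have hd : 0 < dist (x i) (c i.castSucc) := by linarith
      simp only [hz, if_neg (not_le.mpr hcase)]
      have e : x i + ((4 * r 6) / dist (x i) (c i.castSucc)) • (c i.castSucc - x i)
          - c i.castSucc
          = (1 - (4 * r 6) / dist (x i) (c i.castSucc)) • (x i - c i.castSucc) := by
        have h1 : (1 : ℝ) - (4 * r 6) / dist (x i) (c i.castSucc)
            = 1 - (4 * r 6) / dist (x i) (c i.castSucc) := rfl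
        module
      rw [dist_eq_norm, e, norm_smul, Real.norm_eq_abs]
      have ht : (4 * r 6) / dist (x i) (c i.castSucc) ≤ 1 := by
        rw [div_le_one hd]; linarith
      rw [abs_of_nonneg (by linarith)]
      have hxd : ‖x i - c i.castSucc‖ = dist (x i) (c i.castSucc) := (dist_eq_norm _ _).symm
      rw [hxd]
      have hdle : dist (x i) (c i.castSucc) ≤ r i.castSucc / 4 := mem_closedBall.mp (hxD i)
      have expand : (1 - 4 * r 6 / dist (x i) (c i.castSucc)) * dist (x i) (c i.castSucc)
          = dist (x i) (c i.castSucc) - 4 * r 6 := by field_simp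
      rw [expand]; linarith
  have hz6 : ∀ i : Fin 6, dist (z i) (c 6) ≤ 6 * r 6 := by
    intro i
    have hxB' : dist (x i) (c 6) ≤ 2 * r 6 := mem_closedBall.mp (hxB i)
    by_cases hcase : dist (x i) (c i.castSucc) ≤ 4 * r 6
    · simp only [hz, if_pos hcase]
      calc dist (c i.castSucc) (c 6) ≤ dist (c i.castSucc) (x i) + dist (x i) (c 6) :=
            dist_triangle _ _ _
        _ ≤ 4 * r 6 + 2 * r 6 := by rw [dist_comm]; exact add_le_add hcase hxB'
        _ = 6 * r 6 := by ring
    · push_neg at hcase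
      have hd : 0 < dist (x i) (c i.castSucc) := by linarith
      simp only [hz, if_neg (not_le.mpr hcase)]
      have e : x i + ((4 * r 6) / dist (x i) (c i.castSucc)) • (c i.castSucc - x i) - x i
          = ((4 * r 6) / dist (x i) (c i.castSucc)) • (c i.castSucc - x i) := by module
      have hzx : dist (x i + ((4 * r 6) / dist (x i) (c i.castSucc)) • (c i.castSucc - x i))
          (x i) = 4 * r 6 := by
        rw [dist_eq_norm, e, norm_smul, Real.norm_eq_abs,
          abs_of_nonneg (by positivity)]
        have : ‖c i.castSucc - x i‖ = dist (x i) (c i.castSucc) := by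
          rw [← dist_eq_norm, dist_comm]
        rw [this]; field_simp
      calc dist _ (c 6) ≤ dist _ (x i) + dist (x i) (c 6) := dist_triangle _ _ _
        _ ≤ 4 * r 6 + 2 * r 6 := add_le_add (le_of_eq hzx) hxB'
        _ = 6 * r 6 := by ring
  -- disjointness gives centers far apart
  have disj_dist : ∀ i j : Fin 6, i ≠ j →
      r i.castSucc / 4 + r j.castSucc / 4 < dist (c i.castSucc) (c j.castSucc) := by
    intro i j hij
    set a := c i.castSucc; set b := c j.castSucc
    set ra := r i.castSucc / 4; set rb := r j.castSucc / 4
    have hra : 0 < ra := by have := hr i.castSucc; positivity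
    have hrb : 0 < rb := by have := hr j.castSucc; positivity
    by_contra h'
    push_neg at h'
    set y := a + (ra / (ra + rb)) • (b - a) with hy
    have hsum : 0 < ra + rb := by linarith
    have hya : dist y a = (ra / (ra + rb)) * dist a b := by
      rw [dist_eq_norm]
      have e : y - a = (ra / (ra + rb)) • (b - a) := by rw [hy]; abel
      rw [e, norm_smul, Real.norm_eq_abs, abs_of_nonneg (by positivity), dist_eq_norm,
        norm_sub_rev]
    have hyb : dist y b = (rb / (ra + rb)) * dist a b := by
      rw [dist_eq_norm]
      have e : y - b = (rb / (ra + rb)) • (a - b) := by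
        rw [hy]
        have h1 : (ra / (ra + rb)) = 1 - rb / (ra + rb) := by field_simp; ring
        rw [h1]; module
      rw [e, norm_smul, Real.norm_eq_abs, abs_of_nonneg (by positivity), dist_eq_norm]
    have hy1 : y ∈ closedBall a ra := by
      rw [mem_closedBall, hya]
      calc ra / (ra + rb) * dist a b ≤ ra / (ra + rb) * (ra + rb) :=
            mul_le_mul_of_nonneg_left h' (by positivity)
        _ = ra := by field_simp
    have hy2 : y ∈ closedBall b rb := by
      rw [mem_closedBall, hyb]
      calc rb / (ra + rb) * dist a b ≤ rb / (ra + rb) * (ra + rb) :=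
            mul_le_mul_of_nonneg_left h' (by positivity)
        _ = rb := by field_simp
    exact Set.disjoint_left.mp (hdisj i j hij) hy1 hy2
  have hzz : ∀ i j : Fin 6, i ≠ j → 8 * r 6 < dist (z i) (z j) := by
    intro i j hij
    have h1 := disj_dist i j hij
    have h2 := hzc i
    have h3 := hzc j
    have t1 : dist (c i.castSucc) (c j.castSucc) ≤
        dist (c i.castSucc) (z i) + dist (z i) (z j) + dist (z j) (c j.castSucc) :=
      dist_triangle4 _ _ _ _
    rw [dist_comm (c i.castSucc) (z i)] at t1
    linarith
  -- final pigeonhole on arguments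
  set u : Fin 6 → ℂ := fun i => z i - c 6 with hu
  have hθ : ∀ i, Complex.arg (u i) ∈ Set.Ioc (-π) π := fun i => Complex.arg_mem_Ioc (u i)
  -- pigeonhole: two directions within 60°
  obtain ⟨i, j, hij, hcos⟩ :
      ∃ i j : Fin 6, i ≠ j ∧ 1/2 ≤ Real.cos (Complex.arg (u i) - Complex.arg (u j)) := by
    set θ : Fin 6 → ℝ := fun i => Complex.arg (u i)
    set σ := Tuple.sort θ with hσ
    have mono := Tuple.monotone_sort θ
    have g01 : θ (σ 0) ≤ θ (σ 1) := mono (by decide : (0:Fin 6) ≤ 1)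
    have g12 : θ (σ 1) ≤ θ (σ 2) := mono (by decide : (1:Fin 6) ≤ 2)
    have g23 : θ (σ 2) ≤ θ (σ 3) := mono (by decide : (2:Fin 6) ≤ 3)
    have g34 : θ (σ 3) ≤ θ (σ 4) := mono (by decide : (3:Fin 6) ≤ 4)
    have g45 : θ (σ 4) ≤ θ (σ 5) := mono (by decide : (4:Fin 6) ≤ 5)
    have hne : ∀ a b : Fin 6, a ≠ b → σ a ≠ σ b := fun a b h e => h (σ.injective e)
    have cons : ∀ a b : Fin 6, a ≠ b → θ (σ a) ≤ θ (σ b) → θ (σ b) - θ (σ a) ≤ π/3 →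
        ∃ i j : Fin 6, i ≠ j ∧ 1/2 ≤ Real.cos (θ i - θ j) := by
      intro a b hab hle hgap
      exact ⟨σ b, σ a, hne b a (Ne.symm hab), cos_half' (by linarith) hgap⟩
    by_cases h01 : θ (σ 1) - θ (σ 0) ≤ π/3
    · exact cons 0 1 (by decide) g01 h01
    by_cases h12 : θ (σ 2) - θ (σ 1) ≤ π/3
    · exact cons 1 2 (by decide) g12 h12
    by_cases h23 : θ (σ 3) - θ (σ 2) ≤ π/3
    · exact cons 2 3 (by decide) g23 h23
    by_cases h34 : θ (σ 4) - θ (σ 3) ≤ π/3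
    · exact cons 3 4 (by decide) g34 h34
    by_cases h45 : θ (σ 5) - θ (σ 4) ≤ π/3
    · exact cons 4 5 (by decide) g45 h45
    push_neg at h01 h12 h23 h34 h45
    have h5 := hθ (σ 5)
    have h0 := hθ (σ 0)
    refine ⟨σ 5, σ 0, hne 5 0 (by decide), ?_⟩
    have key : Real.cos (θ (σ 5) - θ (σ 0)) = Real.cos (2*π - (θ (σ 5) - θ (σ 0))) := by
      rw [Real.cos_two_pi_sub]
    rw [key]
    exact cos_half' (by linarith [h5.2, h0.1]) (by linarith [h5.2, h0.1])
  -- triangle inequality via norms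
  have hmax : ‖u i - u j‖ ≤ max ‖u i‖ ‖u j‖ := by
    set a := ‖u i‖ with ha
    set b := ‖u j‖ with hb
    set α := Complex.arg (u i)
    set β := Complex.arg (u j)
    have hui : u i = (a : ℂ) * Complex.exp (α * Complex.I) :=
      (Complex.norm_mul_exp_arg_mul_I (u i)).symm
    have huj : u j = (b : ℂ) * Complex.exp (β * Complex.I) :=
      (Complex.norm_mul_exp_arg_mul_I (u j)).symm
    have key : ‖u i - u j‖^2
        = a^2 + b^2 - 2*a*b*(Real.cos α * Real.cos β + Real.sin α * Real.sin β) := by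
      rw [Complex.sq_norm, hui, huj]
      simp [Complex.normSq_apply, Complex.exp_mul_I, Complex.sub_re,
        Complex.sub_im, Complex.add_re, Complex.add_im, Complex.mul_re, Complex.mul_im,
        ← Complex.ofReal_cos, ← Complex.ofReal_sin]
      nlinarith [Real.sin_sq_add_cos_sq α, Real.sin_sq_add_cos_sq β]
    rw [Real.cos_sub] at hcos
    have ha0 : 0 ≤ a := norm_nonneg _
    have hb0 : 0 ≤ b := norm_nonneg _
    have hn : ‖u i‖ = a := rfl
    have hm : ‖u j‖ = b := rfl
    rcases le_total a b with hab | hab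
    · rw [max_eq_right hab]
      nlinarith [norm_nonneg (u i - u j), mul_nonneg ha0 hb0]
    · rw [max_eq_left hab]
      nlinarith [norm_nonneg (u i - u j), mul_nonneg ha0 hb0]
  have e1 : ‖u i - u j‖ = dist (z i) (z j) := by
    rw [dist_eq_norm, ← sub_sub_sub_cancel_right (z i) (z j) (c 6)]
  have e2 : ‖u i‖ = dist (z i) (c 6) := (dist_eq_norm _ _).symm
  have e3 : ‖u j‖ = dist (z j) (c 6) := (dist_eq_norm _ _).symm
  have big := hzz i j hij
  rw [e1, e2, e3] at hmax
  have m1 := hz6 i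
  have m2 := hz6 j
  have : max (dist (z i) (c 6)) (dist (z j) (c 6)) ≤ 6 * r 6 := max_le m1 m2
  linarith [le_trans hmax this]
end

section
/- (Ahlfors-type lemma via length-area) Let f : ℂ → ℂᵏ be a nonconstant holomorphic curve with A(r) = ∫_{D_r} |f'|² dλ and L(r) = ∫_{∂D_r} |f'| ds. Then liminf_{r→∞} L(r)/A(r) = 0. -/
open Metric MeasureTheory Real Filter Set

lemma cs_aux (g : ℝ → ℝ) (hg : Continuous g) {a b : ℝ} (hab : a ≤ b) :
    (∫ x in a..b, g x) ^ 2 ≤ (b - a) * ∫ x in a..b, (g x) ^ 2 := by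
  rcases eq_or_lt_of_le hab with rfl | hlt
  · simp
  have hba : 0 < b - a := by linarith
  set I := ∫ x in a..b, g x with hI
  set c := I / (b - a) with hc
  have hint : IntervalIntegrable g volume a b := hg.intervalIntegrable a b
  have hint2 : IntervalIntegrable (fun x => (g x)^2) volume a b :=
    (hg.pow 2).intervalIntegrable a b
  have key : 0 ≤ ∫ x in a..b, (g x - c)^2 := by
    apply intervalIntegral.integral_nonneg hab
    intro x _; positivity
  have expand : (∫ x in a..b, (g x - c)^2)
      = (∫ x in a..b, (g x)^2) - 2*c*I + c^2*(b-a) := by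
    have : ∀ x, (g x - c)^2 = (g x)^2 - (2*c) * g x + c^2 := by intro x; ring
    simp_rw [this]
    rw [intervalIntegral.integral_add, intervalIntegral.integral_sub hint2,
      intervalIntegral.integral_const_mul, intervalIntegral.integral_const]
    · simp only [smul_eq_mul]; ring
    · exact hint.const_mul _
    · exact hint2.sub (hint.const_mul _)
    · exact intervalIntegrable_const
  have : 0 ≤ (∫ x in a..b, (g x)^2) - I^2/(b-a) := by
    rw [expand] at key
    have hc2 : c^2*(b-a) = I^2/(b-a) := by rw [hc]; field_simp
    have hc3 : 2*c*I = 2*(I^2/(b-a)) := by rw [hc]; field_simp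
    rw [hc2, hc3] at key
    linarith
  have := mul_le_mul_of_nonneg_left this hba.le
  calc I^2 = (b-a) * (I^2/(b-a)) := by field_simp
  _ ≤ (b-a) * ∫ x in a..b, (g x)^2 := by nlinarith [this]

lemma polar_symm_eq (s θ : ℝ) :
    Complex.polarCoord.symm (s, θ) = s * Complex.exp (θ * Complex.I) := by
  rw [Complex.polarCoord_symm_apply, Complex.exp_mul_I]
  push_cast
  ring

lemma area_polar (F : ℂ → ℝ) (hF : Continuous F) {r : ℝ} (hr : 0 ≤ r) :
    ∫ z in ball (0:ℂ) r, F z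
      = ∫ s in (0:ℝ)..r, s * ∫ θ in (-π)..π, F (s * Complex.exp (θ * Complex.I)) := by
  have hmain := Complex.integral_comp_polarCoord_symm ((ball (0:ℂ) r).indicator F)
  rw [MeasureTheory.integral_indicator measurableSet_ball] at hmain
  rw [← hmain]
  have hcong : ∀ p ∈ polarCoord.target,
      p.1 • (ball (0:ℂ) r).indicator F (Complex.polarCoord.symm p)
        = (Ioo (0:ℝ) r ×ˢ Ioo (-π) π).indicator
            (fun p : ℝ × ℝ => p.1 * F (p.1 * Complex.exp (p.2 * Complex.I))) p := by
    rintro ⟨s, θ⟩ hp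
    rw [polarCoord_target] at hp
    obtain ⟨hs, hθ⟩ := hp
    simp only [Set.mem_Ioi] at hs
    have habs : ‖Complex.polarCoord.symm (s, θ)‖ = s := by
      rw [Complex.norm_polarCoord_symm, abs_of_pos hs]
    have hmem : Complex.polarCoord.symm (s, θ) ∈ ball (0:ℂ) r ↔ s < r := by
      rw [mem_ball, Complex.dist_eq, sub_zero, habs]
    by_cases hsr : s < r
    · rw [Set.indicator_of_mem (hmem.mpr hsr), Set.indicator_of_mem
        (Set.mk_mem_prod (Set.mem_Ioo.mpr ⟨hs, hsr⟩) hθ), polar_symm_eq, smul_eq_mul]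
    · rw [Set.indicator_of_notMem (fun h => hsr (hmem.mp h)),
        Set.indicator_of_notMem (fun h => hsr h.1.2), smul_zero]
  rw [setIntegral_congr_fun polarCoord.open_target.measurableSet hcong]
  rw [MeasureTheory.setIntegral_indicator (measurableSet_Ioo.prod measurableSet_Ioo)]
  have hTS : polarCoord.target ∩ (Ioo (0:ℝ) r ×ˢ Ioo (-π) π) = Ioo (0:ℝ) r ×ˢ Ioo (-π) π := by
    rw [polarCoord_target]
    apply Set.inter_eq_self_of_subset_right
    exact Set.prod_mono Set.Ioo_subset_Ioi_self le_rfl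
  rw [hTS]
  have hcont : Continuous (fun p : ℝ × ℝ => p.1 * F (p.1 * Complex.exp (p.2 * Complex.I))) := by
    fun_prop
  have hInt : IntegrableOn (fun p : ℝ × ℝ => p.1 * F (p.1 * Complex.exp (p.2 * Complex.I)))
      (Ioo (0:ℝ) r ×ˢ Ioo (-π) π) volume := by
    apply IntegrableOn.mono_set (t := Icc (0:ℝ) r ×ˢ Icc (-π) π)
    · exact hcont.continuousOn.integrableOn_compact (isCompact_Icc.prod isCompact_Icc)
    · exact Set.prod_mono Set.Ioo_subset_Icc_self Set.Ioo_subset_Icc_self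
  rw [MeasureTheory.Measure.volume_eq_prod] at hInt ⊢
  rw [MeasureTheory.setIntegral_prod _ hInt]
  rw [intervalIntegral.integral_of_le hr, MeasureTheory.integral_Ioc_eq_integral_Ioo]
  apply setIntegral_congr_fun measurableSet_Ioo
  intro s _
  dsimp only
  rw [intervalIntegral.integral_of_le (by linarith [pi_pos] : -π ≤ π),
    MeasureTheory.integral_Ioc_eq_integral_Ioo, ← MeasureTheory.integral_const_mul]

lemma ode_contra (φ : ℝ → ℝ) (hφ : Continuous φ)
    (r₀ : ℝ) (hr₀ : 0 < r₀) (c : ℝ) (hc : 0 < c)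
    (hG0 : 0 < ∫ s in (0:ℝ)..r₀, φ s)
    (hφ0 : ∀ s, r₀ ≤ s → 0 ≤ φ s)
    (hkey : ∀ s, r₀ ≤ s → c * (∫ u in (0:ℝ)..s, φ u)^2 / s ≤ φ s) : False := by
  set G : ℝ → ℝ := fun s => ∫ u in (0:ℝ)..s, φ u with hGdef
  have hGd : ∀ s, HasDerivAt G (φ s) s := fun s =>
    (hφ.integral_hasStrictDerivAt 0 s).hasDerivAt
  have hGc : Continuous G := continuous_iff_continuousAt.mpr fun s => (hGd s).continuousAt
  have hGmono : ∀ s, r₀ ≤ s → G r₀ ≤ G s := by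
    intro s hs
    have : G s - G r₀ = ∫ u in r₀..s, φ u := by
      rw [hGdef]
      dsimp only
      rw [← intervalIntegral.integral_add_adjacent_intervals
        (hφ.intervalIntegrable 0 r₀) (hφ.intervalIntegrable r₀ s)]
      ring
    have h2 : 0 ≤ ∫ u in r₀..s, φ u :=
      intervalIntegral.integral_nonneg hs (fun u hu => hφ0 u hu.1)
    linarith
  have hGpos : ∀ s, r₀ ≤ s → 0 < G s := fun s hs => lt_of_lt_of_le hG0 (hGmono s hs)
  set R : ℝ := r₀ * Real.exp (((G r₀)⁻¹ + 1)/c) with hRdef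
  have hexp1 : (1:ℝ) ≤ Real.exp (((G r₀)⁻¹ + 1)/c) := by
    rw [Real.one_le_exp_iff]
    have : 0 < (G r₀)⁻¹ := inv_pos.mpr hG0
    positivity
  have hR : r₀ ≤ R := by
    nlinarith
  -- FTC for 1/G on [r₀, R]
  have hderiv : ∀ s ∈ Set.uIcc r₀ R, HasDerivAt (fun u => (G u)⁻¹) (-(φ s) / (G s)^2) s := by
    intro s hs
    rw [Set.uIcc_of_le hR] at hs
    exact (hGd s).inv (ne_of_gt (hGpos s hs.1))
  have hcontd : ContinuousOn (fun s => -(φ s) / (G s)^2) (Set.uIcc r₀ R) := by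
    apply ContinuousOn.div (hφ.neg.continuousOn) ((hGc.pow 2).continuousOn)
    intro s hs
    rw [Set.uIcc_of_le hR] at hs
    exact pow_ne_zero _ (ne_of_gt (hGpos s hs.1))
  have hftc := intervalIntegral.integral_eq_sub_of_hasDerivAt hderiv
    (hcontd.intervalIntegrable)
  have hmono : ∫ s in r₀..R, -(φ s) / (G s)^2 ≤ ∫ s in r₀..R, -(c / s) := by
    apply intervalIntegral.integral_mono_on hR hcontd.intervalIntegrable
    · apply ContinuousOn.intervalIntegrable
      apply ContinuousOn.neg
      apply ContinuousOn.div continuousOn_const continuousOn_id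
      intro s hs
      rw [Set.uIcc_of_le hR] at hs
      exact ne_of_gt (lt_of_lt_of_le hr₀ hs.1)
    · intro s hs
      have hs0 : 0 < s := lt_of_lt_of_le hr₀ hs.1
      have hGs := hGpos s hs.1
      have hk := hkey s hs.1
      have hk' : c * (G s)^2 ≤ φ s * s := (div_le_iff₀ hs0).mp hk
      have h1 : c / s ≤ φ s / (G s)^2 := by
        rw [div_le_div_iff₀ hs0 (by positivity)]
        linarith
      rw [neg_div]
      exact neg_le_neg h1
  have hlog : ∫ s in r₀..R, -(c / s) = -(c * Real.log (R / r₀)) := by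
    rw [intervalIntegral.integral_neg]
    congr 1
    have hnz : (0:ℝ) ∉ Set.uIcc r₀ R := by
      intro h
      rw [Set.uIcc_of_le hR] at h
      exact absurd h.1 (not_le.mpr hr₀)
    have hcx : ∀ x : ℝ, c / x = c * x⁻¹ := fun x => div_eq_mul_inv c x
    simp_rw [hcx]
    rw [intervalIntegral.integral_const_mul, integral_inv hnz]
  have hlogR : Real.log (R / r₀) = ((G r₀)⁻¹ + 1)/c := by
    rw [hRdef]
    rw [mul_div_cancel_left₀ _ (ne_of_gt hr₀)]
    exact Real.log_exp _
  have hGR : 0 < (G R)⁻¹ := inv_pos.mpr (hGpos R hR)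
  rw [hftc, hlog, hlogR] at hmono
  have : c * (((G r₀)⁻¹ + 1)/c) = (G r₀)⁻¹ + 1 := by field_simp
  rw [this] at hmono
  linarith

/-- Ahlfors-type lemma via length–area: for a nonconstant entire curve
`f : ℂ → ℂᵏ`, with `A(r) = ∫_{D_r} |f'|² dλ` and `L(r) = ∫_{∂D_r} |f'| ds`,
one has `liminf_{r→∞} L(r)/A(r) = 0`. -/
theorem stmt_10 {k : ℕ} (f : ℂ → EuclideanSpace ℂ (Fin k))
    (hol : Differentiable ℂ f) (hnc : ∃ z w : ℂ, f z ≠ f w)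
    (A L : ℝ → ℝ)
    (hA : ∀ r, A r = ∫ z in ball (0 : ℂ) r, ‖deriv f z‖ ^ 2 ∂volume)
    (hL : ∀ r, L r = ∫ θ in (0 : ℝ)..(2 * π),
        ‖deriv f (r * Complex.exp (θ * Complex.I))‖ * r) :
    Filter.liminf (fun r => L r / A r) Filter.atTop = 0 := by
  obtain ⟨z, w, hzw⟩ := hnc
  have hder : Differentiable ℂ (deriv f) := by
    have h1 : AnalyticOnNhd ℂ f Set.univ := Complex.analyticOnNhd_univ_iff_differentiable.mpr hol
    exact fun x => ((h1.deriv) x (Set.mem_univ x)).differentiableAt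
  have hdc : Continuous (deriv f) := hder.continuous
  set F : ℂ → ℝ := fun z => ‖deriv f z‖^2 with hFdef
  have hF : Continuous F := (hdc.norm.pow 2)
  set φ : ℝ → ℝ := fun s => s * ∫ θ in (-π)..π, F (s * Complex.exp (θ * Complex.I)) with hφdef
  have hφc : Continuous φ := by
    apply continuous_id.mul
    exact intervalIntegral.continuous_parametric_intervalIntegral_of_continuous'
      (f := fun (s : ℝ) (θ : ℝ) => F (s * Complex.exp (θ * Complex.I))) (by fun_prop) (-π) π
  have hAG : ∀ r, 0 ≤ r → A r = ∫ s in (0:ℝ)..r, φ s := by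
    intro r hr
    rw [hA r]
    exact area_polar F hF hr
  have hφ0 : ∀ s, (0:ℝ) ≤ s → 0 ≤ φ s := by
    intro s hs
    apply mul_nonneg hs
    apply intervalIntegral.integral_nonneg (by linarith [pi_pos])
    intro θ _; positivity
  have hAnonneg : ∀ r, 0 ≤ A r := by
    intro r
    rw [hA r]
    exact setIntegral_nonneg measurableSet_ball (fun z _ => by positivity)
  have hLnonneg : ∀ r, 0 ≤ r → 0 ≤ L r := by
    intro r hr
    rw [hL r]
    apply intervalIntegral.integral_nonneg (by positivity)
    intro θ _
    exact mul_nonneg (norm_nonneg _) hr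
  have h0 : ∀ᶠ r in atTop, 0 ≤ L r / A r := by
    rw [eventually_atTop]
    exact ⟨0, fun r hr => div_nonneg (hLnonneg r hr) (hAnonneg r)⟩
  -- positivity of A at some radius
  have hz0 : ∃ z₀, deriv f z₀ ≠ 0 := by
    by_contra h
    push_neg at h
    exact hzw (is_const_of_deriv_eq_zero hol h z w)
  obtain ⟨z₀, hz₀⟩ := hz0
  have hFz₀ : 0 < F z₀ := by
    have : ‖deriv f z₀‖ ≠ 0 := norm_ne_zero_iff.mpr hz₀
    positivity
  have hev : ∀ᶠ u in nhds z₀, F z₀ / 2 < F u :=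
    (hF.continuousAt).eventually_const_lt (by linarith)
  obtain ⟨δ, hδpos, hδ⟩ := Metric.eventually_nhds_iff_ball.mp hev
  set r₁ : ℝ := dist z₀ 0 + δ with hr₁def
  have hr₁pos : 0 < r₁ := add_pos_of_nonneg_of_pos dist_nonneg hδpos
  have hsub : ball z₀ δ ⊆ ball (0:ℂ) r₁ := by
    intro u hu
    rw [mem_ball] at hu ⊢
    calc dist u 0 ≤ dist u z₀ + dist z₀ 0 := dist_triangle _ _ _
    _ < δ + dist z₀ 0 := by linarith
    _ = r₁ := by rw [hr₁def]; ring
  have hApos : 0 < A r₁ := by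
    rw [hA r₁]
    have hint : IntegrableOn F (ball (0:ℂ) r₁) volume :=
      (hF.continuousOn.integrableOn_compact (isCompact_closedBall _ _)).mono_set
        ball_subset_closedBall
    have h1 : ∫ z in ball z₀ δ, F z ≤ ∫ z in ball (0:ℂ) r₁, F z :=
      setIntegral_mono_set hint (Filter.Eventually.of_forall fun z => by positivity)
        (HasSubset.Subset.eventuallyLE hsub)
    have h2 : (F z₀/2) * (volume (ball z₀ δ)).toReal ≤ ∫ z in ball z₀ δ, F z := by
      apply setIntegral_ge_of_const_le_real measurableSet_ball (measure_ball_lt_top).ne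
      · exact fun x hx => (hδ x hx).le
      · exact hint.mono_set hsub
    have h3 : 0 < (volume (ball z₀ δ)).toReal :=
      ENNReal.toReal_pos (measure_ball_pos volume z₀ hδpos).ne' (measure_ball_lt_top).ne
    calc (0:ℝ) < (F z₀/2) * (volume (ball z₀ δ)).toReal := by positivity
    _ ≤ ∫ z in ball z₀ δ, F z := h2
    _ ≤ _ := h1
  -- A is nondecreasing past r₁
  have hAmono : ∀ r r', 0 ≤ r → r ≤ r' → A r ≤ A r' := by
    intro r r' hr hrr'
    rw [hAG r hr, hAG r' (le_trans hr hrr')]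
    have hdiff : (∫ s in (0:ℝ)..r', φ s) - (∫ s in (0:ℝ)..r, φ s) = ∫ s in r..r', φ s := by
      rw [← intervalIntegral.integral_add_adjacent_intervals
        (hφc.intervalIntegrable 0 r) (hφc.intervalIntegrable r r')]
      ring
    have hpos : 0 ≤ ∫ s in r..r', φ s :=
      intervalIntegral.integral_nonneg hrr' (fun s hs => hφ0 s (le_trans hr hs.1))
    linarith
  -- frequently small
  have hfreq : ∀ ε : ℝ, 0 < ε → ∃ᶠ r in atTop, L r / A r < ε := by
    intro ε hε
    by_contra hcon
    rw [Filter.not_frequently] at hcon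
    have hcon' : ∀ᶠ r in atTop, ε ≤ L r / A r := hcon.mono (fun r hr => not_lt.mp hr)
    obtain ⟨r₂, hr₂⟩ := eventually_atTop.mp hcon'
    set r₀ : ℝ := max r₁ r₂ with hr₀def
    have hr₀pos : 0 < r₀ := lt_of_lt_of_le hr₁pos (le_max_left _ _)
    have hApos' : ∀ s, r₀ ≤ s → 0 < A s := fun s hs =>
      lt_of_lt_of_le hApos (hAmono r₁ s hr₁pos.le (le_trans (le_max_left _ _) hs))
    set c : ℝ := ε^2 / (2*π) with hcdef
    have hπ : (0:ℝ) < 2*π := by positivity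
    have hc : 0 < c := by positivity
    apply ode_contra φ hφc r₀ hr₀pos c hc
    · rw [← hAG r₀ hr₀pos.le]
      exact hApos' r₀ le_rfl
    · exact fun s hs => hφ0 s (le_trans hr₀pos.le hs)
    · intro s hs
      have hs0 : 0 < s := lt_of_lt_of_le hr₀pos hs
      have hAs : 0 < A s := hApos' s hs
      have hεA : ε * A s ≤ L s := by
        have := hr₂ s (le_trans (le_max_right _ _) hs)
        exact (le_div_iff₀ hAs).mp this
      -- Cauchy-Schwarz
      have hcs : (L s)^2 ≤ (2*π) * ∫ θ in (0:ℝ)..(2*π), (‖deriv f (s * Complex.exp (θ * Complex.I))‖ * s)^2 := by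
        rw [hL s]
        have := cs_aux (fun θ => ‖deriv f (s * Complex.exp (θ * Complex.I))‖ * s)
          (by fun_prop) (by positivity : (0:ℝ) ≤ 2*π)
        simpa using this
      have hsq : ∀ θ : ℝ, (‖deriv f (s * Complex.exp (θ * Complex.I))‖ * s)^2
          = s^2 * F (s * Complex.exp (θ * Complex.I)) := by
        intro θ; rw [hFdef]; ring
      have hper : Function.Periodic (fun θ : ℝ => F (s * Complex.exp (θ * Complex.I))) (2*π) := by
        intro θ
        have : ((θ + 2*π : ℝ) : ℂ) * Complex.I = θ * Complex.I + 2*π*Complex.I := by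
          push_cast; ring
        simp only [this, Complex.exp_add, Complex.exp_two_pi_mul_I, mul_one]
      have hperint : ∫ θ in (0:ℝ)..(2*π), F (s * Complex.exp (θ * Complex.I))
          = ∫ θ in (-π)..π, F (s * Complex.exp (θ * Complex.I)) := by
        have h := hper.intervalIntegral_add_eq 0 (-π)
        rw [zero_add, (by ring : -π + 2*π = π)] at h
        exact h
      have hint2 : ∫ θ in (0:ℝ)..(2*π), (‖deriv f (s * Complex.exp (θ * Complex.I))‖ * s)^2
          = s * φ s := by
        simp_rw [hsq]
        rw [intervalIntegral.integral_const_mul, hperint, hφdef]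
        dsimp only
        ring
      have hchain : (ε * A s)^2 ≤ (2*π) * (s * φ s) := by
        calc (ε * A s)^2 ≤ (L s)^2 := by
              apply pow_le_pow_left₀ (by positivity) hεA
        _ ≤ (2*π) * ∫ θ in (0:ℝ)..(2*π), (‖deriv f (s * Complex.exp (θ * Complex.I))‖ * s)^2 := hcs
        _ = (2*π) * (s * φ s) := by rw [hint2]
      rw [← hAG s hs0.le]
      rw [div_le_iff₀ hs0, hcdef]
      have hexp : (ε * A s)^2 = ε^2 * (A s)^2 := by ring
      rw [hexp] at hchain
      calc ε^2/(2*π) * A s^2 = (ε^2 * (A s)^2) / (2*π) := by ring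
      _ ≤ ((2*π) * (s * φ s)) / (2*π) := by gcongr
      _ = φ s * s := by field_simp
  -- conclude liminf = 0
  have hbdd : IsBoundedUnder (· ≥ ·) atTop (fun r => L r / A r) := ⟨0, by
    rw [eventually_map]
    exact h0.mono fun r hr => hr⟩
  have hcob : IsCoboundedUnder (· ≥ ·) atTop (fun r => L r / A r) :=
    Filter.IsCoboundedUnder.of_frequently_le ((hfreq 1 one_pos).mono fun r hr => hr.le)
  apply le_antisymm
  · by_contra hpos
    push_neg at hpos
    have h1 := Filter.liminf_le_of_frequently_le
      ((hfreq (liminf (fun r => L r / A r) atTop / 2) (by linarith)).mono fun r hr => hr.le) hbdd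
    linarith
  · exact Filter.le_liminf_of_le hcob h0
end
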